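/- Maximum-likelihood decoding error bound: consider an LMDP with mixing distribution ρ over L MDPs, and for a trajectory τ̄_W = (s₁,a₁,...,s_W) let m(τ̄_W) be a maximizer over m ∈ supp(ρ) of the posterior probability P(m | τ̄_W). If for every policy-induced pair m ≠ l and every initial state s the Bhattacharyya divergence satisfies D_B(M_{m,W}(π,s), M_{l,W}(π,s)) ≥ ϖ(W), then the probability under policy π that the latent index m* differs from m(τ̄_W) is at most L·exp(−ϖ(W)). -/

import Mathlib

/-- The state at step `i` (0-indexed) when starting at `s` and following the trajectory
`τ = ((a₁,s₂),...,(a_k,s_{k+1}))`. -/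
def stateAt {S A : Type*} (s : S) {k : ℕ} (τ : Fin k → A × S) : ℕ → S
  | 0 => s
  | i + 1 => if h : i < k then (τ ⟨i, h⟩).2 else s

/-- The history `((s₁,a₁),...,(s_i,a_i))` of state-action pairs before step `i`. -/
def histAt {S A : Type*} [Inhabited A] (s : S) {k : ℕ} (τ : Fin k → A × S) (i : ℕ) :
    List (S × A) :=
  (List.range i).map fun j => (stateAt s τ j, if h : j < k then (τ ⟨j, h⟩).1 else default)

/-- The probability of the trajectory `τ = (a₁,s₂,...,a_k,s_{k+1})` when running the
(history-dependent) policy `π` in the MDP with transition kernel `T`, starting at `s`. -/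
noncomputable def trajP {S A : Type*} [Inhabited A]
    (T : S → A → S → ℝ) (π : List (S × A) → S → A → ℝ) (s : S) {k : ℕ}
    (τ : Fin k → A × S) : ℝ :=
  ∏ i : Fin k,
    (π (histAt s τ i) (stateAt s τ i) (τ i).1 * T (stateAt s τ i) (τ i).1 (τ i).2)

/-!
Whenever the decoder errs on a trajectory `τ` with true index `m`, the decoded index `l ≠ m`
has at least the joint likelihood of `m`, so `P(m, τ) ≤ √(P(m, τ) P(l, τ))`. Summing, the error
probability is at most the sum over ordered pairs `m ≠ l` of the Bhattacharyya coefficients of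
the joint laws `ρ_m ν_m T_m^π` and `ρ_l ν_l T_l^π`. Such a coefficient factors as
`√(ρ_m ρ_l) ∑_s √(ν_m(s) ν_l(s)) BC(T_m^π(·|s), T_l^π(·|s)) ≤ √(ρ_m ρ_l) e^{-c}`,
and `∑_{m ≠ l} √(ρ_m ρ_l) = (∑_m √ρ_m)² - 1 ≤ L - 1` by Cauchy–Schwarz.
-/

open Finset

section Bhattacharyya

open Real

theorem le_exp_neg_of_le_neg_log {x c : ℝ} (h : c ≤ -log x) : x ≤ exp (-c) :=
  (le_exp_log x).trans (exp_le_exp.mpr (by linarith))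

variable {X Y ι : Type*} [Fintype X] [Fintype Y] [Fintype ι]

noncomputable def bhattacharyyaCoeff (p q : X → ℝ) : ℝ := ∑ x, √(p x * q x)

theorem bhattacharyyaCoeff_le_one {p q : X → ℝ} (hp0 : ∀ x, 0 ≤ p x) (hp1 : ∑ x, p x = 1)
    (hq0 : ∀ x, 0 ≤ q x) (hq1 : ∑ x, q x = 1) : bhattacharyyaCoeff p q ≤ 1 := by
  calc bhattacharyyaCoeff p q = ∑ x, √(p x) * √(q x) :=
        sum_congr rfl fun x _ => sqrt_mul (hp0 x) _
    _ ≤ √(∑ x, p x) * √(∑ x, q x) := sum_sqrt_mul_sqrt_le _ hp0 hq0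
    _ = 1 := by rw [hp1, hq1, sqrt_one, one_mul]

theorem bhattacharyyaCoeff_const_mul {p q : X → ℝ} {a b : ℝ} (hab : 0 ≤ a * b) :
    bhattacharyyaCoeff (fun x => a * p x) (fun x => b * q x) =
      √(a * b) * bhattacharyyaCoeff p q := by
  simp only [bhattacharyyaCoeff, mul_sum, ← sqrt_mul hab]
  exact sum_congr rfl fun x _ => by ring_nf

theorem bhattacharyyaCoeff_compProd_le {μ μ' : X → ℝ} {K K' : X → Y → ℝ}
    (hμ0 : ∀ x, 0 ≤ μ x) (hμ1 : ∑ x, μ x = 1) (hμ'0 : ∀ x, 0 ≤ μ' x) (hμ'1 : ∑ x, μ' x = 1)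
    {ε : ℝ} (hε : 0 ≤ ε) (hK : ∀ x, bhattacharyyaCoeff (K x) (K' x) ≤ ε) :
    bhattacharyyaCoeff (fun z : X × Y => μ z.1 * K z.1 z.2) (fun z => μ' z.1 * K' z.1 z.2)
      ≤ ε := by
  calc bhattacharyyaCoeff (fun z : X × Y => μ z.1 * K z.1 z.2) (fun z => μ' z.1 * K' z.1 z.2)
      = ∑ x, √(μ x * μ' x) * bhattacharyyaCoeff (K x) (K' x) := by
        rw [bhattacharyyaCoeff, Fintype.sum_prod_type]
        exact sum_congr rfl fun x _ =>
          bhattacharyyaCoeff_const_mul (mul_nonneg (hμ0 x) (hμ'0 x))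
    _ ≤ ∑ x, √(μ x * μ' x) * ε := by gcongr with x; exact hK x
    _ = bhattacharyyaCoeff μ μ' * ε := (sum_mul ..).symm
    _ ≤ 1 * ε := by gcongr; exact bhattacharyyaCoeff_le_one hμ0 hμ1 hμ'0 hμ'1
    _ = ε := one_mul ε

theorem sum_misdecoded_le_sum_bhattacharyyaCoeff [DecidableEq ι] {p : ι → X → ℝ}
    (hp : ∀ m x, 0 ≤ p m x) (d : X → ι) (hd : ∀ x m, p m x ≤ p (d x) x) :
    ∑ m, ∑ x, (if d x ≠ m then p m x else 0) ≤
      ∑ m, ∑ l ∈ univ.erase m, bhattacharyyaCoeff (p m) (p l) := by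
  gcongr with m
  simp only [bhattacharyyaCoeff]
  rw [sum_comm]
  gcongr with x
  split_ifs with h
  · calc p m x ≤ √(p m x * p (d x) x) :=
          le_sqrt_of_sq_le (by rw [sq]; exact mul_le_mul_of_nonneg_left (hd x m) (hp m x))
      _ ≤ ∑ l ∈ univ.erase m, √(p m x * p l x) :=
          single_le_sum (f := fun l => √(p m x * p l x)) (fun _ _ => sqrt_nonneg _)
            (mem_erase.mpr ⟨h, mem_univ _⟩)
  · exact sum_nonneg fun _ _ => sqrt_nonneg _

theorem sum_sum_erase_sqrt_mul_le [DecidableEq ι] {ρ : ι → ℝ}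
    (hρ0 : ∀ m, 0 ≤ ρ m) (hρ1 : ∑ m, ρ m = 1) :
    ∑ m, ∑ l ∈ univ.erase m, √(ρ m * ρ l) ≤ Fintype.card ι - 1 := by
  have hdiag : ∑ m, ∑ l ∈ univ.erase m, √(ρ m * ρ l) = (∑ m, √(ρ m)) ^ 2 - 1 := by
    have hsq : ∀ m, √(ρ m * ρ m) = ρ m := fun m => sqrt_mul_self (hρ0 m)
    simp only [sum_erase_eq_sub (mem_univ _), sum_sub_distrib, hsq, hρ1]
    simp only [sq, sum_mul_sum, sqrt_mul (hρ0 _)]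
  have hcs : (∑ m, √(ρ m)) ^ 2 ≤ Fintype.card ι := by
    simpa [sq_sqrt (hρ0 _), hρ1] using
      sq_sum_le_card_mul_sum_sq (s := univ) (f := fun m => √(ρ m))
  linarith

end Bhattacharyya

theorem trajP_nonneg {S A : Type*} [Inhabited A] {T : S → A → S → ℝ}
    {π : List (S × A) → S → A → ℝ} (hT0 : ∀ s a s', 0 ≤ T s a s')
    (hπ0 : ∀ hist s a, 0 ≤ π hist s a) (s : S) {k : ℕ} (τ : Fin k → A × S) :
    0 ≤ trajP T π s τ :=
  prod_nonneg fun _ _ => mul_nonneg (hπ0 _ _ _) (hT0 _ _ _)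

theorem mle_decoding_error_bound_general
    {S A : Type*} [Fintype S] [Fintype A] [Inhabited A] {L W : ℕ}
    (ρ : Fin L → ℝ) (hρ0 : ∀ m, 0 ≤ ρ m) (hρ1 : ∑ m, ρ m = 1)
    (ν : Fin L → S → ℝ) (hν0 : ∀ m s, 0 ≤ ν m s) (hν1 : ∀ m, ∑ s, ν m s = 1)
    (T : Fin L → S → A → S → ℝ)
    (hT0 : ∀ m s a s', 0 ≤ T m s a s')
    (π : List (S × A) → S → A → ℝ)
    (hπ0 : ∀ hist s a, 0 ≤ π hist s a)
    (dec : S → (Fin (W - 1) → A × S) → Fin L)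
    (hdec : ∀ s τ m, ρ m * ν m s * trajP (T m) π s τ ≤
      ρ (dec s τ) * ν (dec s τ) s * trajP (T (dec s τ)) π s τ)
    (c : ℝ)
    (hsep : ∀ m l, m ≠ l → ∀ s : S,
      -Real.log (∑ τ : Fin (W - 1) → A × S,
          Real.sqrt (trajP (T m) π s τ * trajP (T l) π s τ)) ≥ c) :
    ∑ m, ∑ s, ∑ τ : Fin (W - 1) → A × S,
        (if dec s τ ≠ m then ρ m * ν m s * trajP (T m) π s τ else 0) ≤
      (L : ℝ) * Real.exp (-c) := by
  set q : Fin L → S × (Fin (W - 1) → A × S) → ℝ := fun m x => ν m x.1 * trajP (T m) π x.1 x.2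
  have hq0 : ∀ m x, 0 ≤ q m x := fun m x =>
    mul_nonneg (hν0 m x.1) (trajP_nonneg (hT0 m) hπ0 _ _)
  have hq : ∀ m l, m ≠ l → bhattacharyyaCoeff (q m) (q l) ≤ Real.exp (-c) := fun m l hml =>
    bhattacharyyaCoeff_compProd_le (hν0 m) (hν1 m) (hν0 l) (hν1 l) (Real.exp_pos _).le
      fun s => le_exp_neg_of_le_neg_log (hsep m l hml s)
  calc _ = ∑ m, ∑ x, if dec x.1 x.2 ≠ m then ρ m * q m x else 0 := by
        simp only [Fintype.sum_prod_type, q, mul_assoc]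
    _ ≤ ∑ m, ∑ l ∈ univ.erase m,
          bhattacharyyaCoeff (fun x => ρ m * q m x) (fun x => ρ l * q l x) :=
        sum_misdecoded_le_sum_bhattacharyyaCoeff (fun m x => mul_nonneg (hρ0 m) (hq0 m x))
          _ fun x m => by simpa only [q, mul_assoc] using hdec x.1 x.2 m
    _ ≤ ∑ m, ∑ l ∈ univ.erase m, √(ρ m * ρ l) * Real.exp (-c) := by
        gcongr with m _ l hl
        rw [bhattacharyyaCoeff_const_mul (mul_nonneg (hρ0 m) (hρ0 l))]
        gcongr
        exact hq m l (ne_of_mem_erase hl).symm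
    _ = (∑ m, ∑ l ∈ univ.erase m, √(ρ m * ρ l)) * Real.exp (-c) := by simp only [sum_mul]
    _ ≤ (L - 1) * Real.exp (-c) := by
        gcongr
        simpa using sum_sum_erase_sqrt_mul_le hρ0 hρ1
    _ ≤ L * Real.exp (-c) := by gcongr; linarith

/-- Maximum-likelihood decoding error bound: in an LMDP with prior `ρ`,
initial distributions `ν_m` and kernels `T_m`, if `dec` maximizes the joint (hence
posterior) likelihood of the latent index given the length-`W` trajectory, and all
pairwise `W`-step trajectory distributions have Bhattacharyya divergence at least `c`
from every initial state, then the probability that `dec` errs is at most `L·exp(-c)`. -/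
theorem mle_decoding_error_bound
    {S A : Type*} [Fintype S] [Fintype A] [Inhabited A] {L W : ℕ} (hW : 1 ≤ W)
    (ρ : Fin L → ℝ) (hρ0 : ∀ m, 0 ≤ ρ m) (hρ1 : ∑ m, ρ m = 1)
    (ν : Fin L → S → ℝ) (hν0 : ∀ m s, 0 ≤ ν m s) (hν1 : ∀ m, ∑ s, ν m s = 1)
    (T : Fin L → S → A → S → ℝ)
    (hT0 : ∀ m s a s', 0 ≤ T m s a s') (hT1 : ∀ m s a, ∑ s', T m s a s' = 1)
    (π : List (S × A) → S → A → ℝ)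
    (hπ0 : ∀ hist s a, 0 ≤ π hist s a) (hπ1 : ∀ hist s, ∑ a, π hist s a = 1)
    (dec : S → (Fin (W - 1) → A × S) → Fin L)
    (hdec : ∀ s τ m, ρ m * ν m s * trajP (T m) π s τ ≤
      ρ (dec s τ) * ν (dec s τ) s * trajP (T (dec s τ)) π s τ)
    (c : ℝ)
    (hsep : ∀ m l, m ≠ l → ∀ s : S,
      -Real.log (∑ τ : Fin (W - 1) → A × S,
          Real.sqrt (trajP (T m) π s τ * trajP (T l) π s τ)) ≥ c) :
    ∑ m, ∑ s, ∑ τ : Fin (W - 1) → A × S,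
        (if dec s τ ≠ m then ρ m * ν m s * trajP (T m) π s τ else 0) ≤
      (L : ℝ) * Real.exp (-c) :=
  mle_decoding_error_bound_general ρ hρ0 hρ1 ν hν0 hν1 T hT0 π hπ0 dec hdec c hsep
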